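/- arXiv:2311.13541 — 5 statements merged into one kernel-verified Lean document; each statement's English description precedes it below -/
import Mathlib

section
/- Let x ∈ ℝ^N and τ > 0, with softmax probabilities p_i = exp(x_i/τ) / Σ_j exp(x_j/τ) and μ = Σ_i p_i x_i. Then Σ_{i=1}^N p_i² (x_i - μ) ≥ 0. -/
theorem softmax_squared_weighted_deviation_nonneg
    (N : ℕ) (x : Fin N → ℝ) (τ : ℝ) (hτ : 0 < τ)
    (p : Fin N → ℝ)
    (hp : ∀ i, p i = Real.exp (x i / τ) / ∑ j, Real.exp (x j / τ))
    (μ : ℝ) (hμ : μ = ∑ i, p i * x i) :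
    0 ≤ ∑ i, (p i) ^ 2 * (x i - μ) := by
  rcases Nat.eq_zero_or_pos N with h0 | hN
  · subst h0; simp
  have hS : (0:ℝ) < ∑ j, Real.exp (x j / τ) := by
    apply Finset.sum_pos (fun j _ => Real.exp_pos _)
    exact Finset.univ_nonempty_iff.mpr (Fin.pos_iff_nonempty.mp hN)
  -- p sums to 1
  have hsum1 : ∑ i, p i = 1 := by
    simp only [hp]
    rw [← Finset.sum_div, div_self (ne_of_gt hS)]
  -- monotonicity of p in x
  have hmono : ∀ i j, x i ≤ x j → p i ≤ p j := by
    intro i j hxy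
    rw [hp i, hp j]
    gcongr
  -- termwise nonnegativity
  have hpnn : ∀ i, 0 ≤ p i := fun i => by
    rw [hp i]; positivity
  have hterm : ∀ i j : Fin N, 0 ≤ p i * p j * ((p i - p j) * (x i - x j)) := by
    intro i j
    apply mul_nonneg (mul_nonneg (hpnn i) (hpnn j))
    rcases le_total (x i) (x j) with h | h
    · exact mul_nonneg_iff.mpr (Or.inr ⟨by linarith [hmono i j h], by linarith⟩)
    · exact mul_nonneg (by linarith [hmono j i h]) (by linarith)
  have hdouble : 0 ≤ ∑ i, ∑ j, p i * p j * ((p i - p j) * (x i - x j)) :=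
    Finset.sum_nonneg fun i _ => Finset.sum_nonneg fun j _ => hterm i j
  -- identity
  have hid : ∑ i, ∑ j, p i * p j * ((p i - p j) * (x i - x j))
      = 2 * ((∑ i, p i) * (∑ i, (p i)^2 * x i) - (∑ i, (p i)^2) * (∑ i, p i * x i)) := by
    have expand : ∀ i j : Fin N, p i * p j * ((p i - p j) * (x i - x j))
        = (p i)^2 * x i * p j - (p i)^2 * (p j * x j)
          - p i * x i * (p j)^2 + p i * ((p j)^2 * x j) := by
      intro i j; ring
    simp only [expand, Finset.sum_add_distrib, Finset.sum_sub_distrib,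
      ← Finset.sum_mul, ← Finset.mul_sum]
    ring
  have hgoal : ∑ i, (p i)^2 * (x i - μ)
      = (∑ i, (p i)^2 * x i) - (∑ i, (p i)^2) * μ := by
    simp only [mul_sub, Finset.sum_sub_distrib, Finset.sum_mul]
  rw [hgoal]
  rw [hsum1] at hid
  rw [hμ]
  nlinarith [hdouble, hid]
end

section
/- Let x ∈ ℝ^N be fixed and for τ > 0 define p_i(τ) = exp(x_i/τ)/Σ_j exp(x_j/τ), and let H(τ) = -Σ_i p_i(τ) log p_i(τ) be the Shannon entropy. Then dH/dτ = (1/τ³) Σ_i p_i (x_i - μ)², where μ = Σ_i p_i x_i. In particular H is monotonically nondecreasing in τ. -/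
/-!
Work at inverse temperature `β = 1 / τ`. With `Z(β) = ∑ exp (β xᵢ)` the Gibbs weights are
`pᵢ = exp (β xᵢ) / Z`, so `log pᵢ = β xᵢ - log Z` and the entropy is `log Z - β μ`. The
log-partition function is a cumulant generating function: `(log Z)' = μ` and `μ' = Var`, hence
`dH/dβ = -β Var`. The chain rule through `β = τ⁻¹` turns this into `Var / τ³ ≥ 0`.
-/

open Real Finset

namespace Gibbs

variable {ι : Type*} [Fintype ι] (x : ι → ℝ)

noncomputable def partitionFn (β : ℝ) : ℝ := ∑ i, exp (β * x i)

noncomputable def weight (β : ℝ) (i : ι) : ℝ := exp (β * x i) / partitionFn x β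

noncomputable def mean (β : ℝ) : ℝ := ∑ i, weight x β i * x i

noncomputable def variance (β : ℝ) : ℝ := ∑ i, weight x β i * (x i - mean x β) ^ 2

theorem partitionFn_pos [Nonempty ι] (β : ℝ) : 0 < partitionFn x β :=
  sum_pos (fun _ _ => exp_pos _) univ_nonempty

theorem weight_nonneg (β : ℝ) (i : ι) : 0 ≤ weight x β i :=
  div_nonneg (exp_pos _).le (sum_nonneg fun _ _ => (exp_pos _).le)

theorem sum_weight [Nonempty ι] (β : ℝ) : ∑ i, weight x β i = 1 := by
  simp only [weight, ← sum_div]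
  exact div_self (partitionFn_pos x β).ne'

theorem sum_weight_mul (w : ι → ℝ) (β : ℝ) :
    ∑ i, weight x β i * w i = (∑ i, w i * exp (β * x i)) / partitionFn x β := by
  simp only [weight, sum_div]
  exact sum_congr rfl fun i _ => by ring

theorem variance_nonneg (β : ℝ) : 0 ≤ variance x β :=
  sum_nonneg fun i _ => mul_nonneg (weight_nonneg x β i) (sq_nonneg _)

theorem variance_eq [Nonempty ι] (β : ℝ) :
    variance x β = ∑ i, weight x β i * x i ^ 2 - mean x β ^ 2 := by
  calc variance x β
      = ∑ i, weight x β i * x i ^ 2 - 2 * mean x β * ∑ i, weight x β i * x i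
          + mean x β ^ 2 * ∑ i, weight x β i := by
        simp only [variance, mul_sum, ← sum_sub_distrib, ← sum_add_distrib]
        exact sum_congr rfl fun i _ => by ring
    _ = _ := by rw [sum_weight, ← mean]; ring

theorem log_weight (β : ℝ) (i : ι) : log (weight x β i) = β * x i - log (partitionFn x β) := by
  have : Nonempty ι := ⟨i⟩
  rw [weight, log_div (exp_ne_zero _) (partitionFn_pos x β).ne', log_exp]

theorem neg_sum_weight_mul_log (β : ℝ) :
    -∑ i, weight x β i * log (weight x β i) = log (partitionFn x β) - β * mean x β := by
  cases isEmpty_or_nonempty ι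
  · simp [partitionFn, mean]
  · rw [mean, mul_sum]
    simp only [log_weight, mul_sub, sum_sub_distrib, ← sum_mul, sum_weight,
      mul_left_comm (weight x β _) β]
    ring

theorem hasDerivAt_sum_mul_exp (w : ι → ℝ) (β : ℝ) :
    HasDerivAt (fun β => ∑ i, w i * exp (β * x i)) (∑ i, w i * x i * exp (β * x i)) β := by
  refine (HasDerivAt.fun_sum fun i _ =>
    (((hasDerivAt_id β).mul_const (x i)).exp.const_mul (w i))).congr_deriv ?_
  exact sum_congr rfl fun i _ => by simp only [id_eq]; ring

theorem hasDerivAt_partitionFn (β : ℝ) :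
    HasDerivAt (partitionFn x) (∑ i, x i * exp (β * x i)) β := by
  have h := hasDerivAt_sum_mul_exp x 1 β
  simp only [Pi.one_apply, one_mul] at h
  exact h

theorem hasDerivAt_log_partitionFn [Nonempty ι] (β : ℝ) :
    HasDerivAt (fun β => log (partitionFn x β)) (mean x β) β := by
  rw [mean, sum_weight_mul]
  exact (hasDerivAt_partitionFn x β).log (partitionFn_pos x β).ne'

theorem hasDerivAt_mean [Nonempty ι] (β : ℝ) : HasDerivAt (mean x) (variance x β) β := by
  have hZ := (partitionFn_pos x β).ne'
  have hmean : mean x = fun β => (∑ i, x i * exp (β * x i)) / partitionFn x β :=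
    funext (sum_weight_mul x x)
  rw [hmean]
  refine ((hasDerivAt_sum_mul_exp x x β).div (hasDerivAt_partitionFn x β) hZ).congr_deriv ?_
  rw [variance_eq, sum_weight_mul, congrFun hmean]
  simp only [← pow_two]
  rw [sub_div, div_pow, sq (partitionFn x β), mul_div_mul_right _ _ hZ]

theorem hasDerivAt_neg_sum_weight_mul_log (β : ℝ) :
    HasDerivAt (fun β => -∑ i, weight x β i * log (weight x β i)) (-β * variance x β) β := by
  simp only [neg_sum_weight_mul_log]
  cases isEmpty_or_nonempty ι
  · simpa [partitionFn, mean, variance] using hasDerivAt_const β (0 : ℝ)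
  · refine ((hasDerivAt_log_partitionFn x β).sub
      ((hasDerivAt_id β).mul (hasDerivAt_mean x β))).congr_deriv ?_
    simp only [id_eq]
    ring

theorem hasDerivAt_neg_sum_weight_inv_mul_log {τ : ℝ} (hτ : τ ≠ 0) :
    HasDerivAt (fun τ => -∑ i, weight x τ⁻¹ i * log (weight x τ⁻¹ i))
      (1 / τ ^ 3 * variance x τ⁻¹) τ := by
  refine ((hasDerivAt_neg_sum_weight_mul_log x τ⁻¹).comp τ (hasDerivAt_inv hτ)).congr_deriv ?_
  field_simp

end Gibbs

theorem softmax_entropy_deriv_and_monotone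
    (N : ℕ) (x : Fin N → ℝ)
    (p : ℝ → Fin N → ℝ)
    (hp : ∀ t i, p t i = Real.exp (x i / t) / ∑ j, Real.exp (x j / t))
    (H : ℝ → ℝ)
    (hH : ∀ t, H t = -∑ i, p t i * Real.log (p t i)) :
    (∀ τ : ℝ, 0 < τ →
      HasDerivAt H
        ((1 / τ ^ 3) * ∑ i, p τ i * (x i - ∑ j, p τ j * x j) ^ 2) τ) ∧
    MonotoneOn H (Set.Ioi (0 : ℝ)) := by
  obtain rfl : p = fun t => Gibbs.weight x t⁻¹ := by
    funext t i
    simp only [hp, Gibbs.weight, Gibbs.partitionFn, inv_mul_eq_div]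
  obtain rfl : H = fun t => -∑ i, Gibbs.weight x t⁻¹ i * log (Gibbs.weight x t⁻¹ i) := funext hH
  have hderiv (τ : ℝ) (hτ : 0 < τ) := Gibbs.hasDerivAt_neg_sum_weight_inv_mul_log x hτ.ne'
  refine ⟨hderiv, monotoneOn_of_hasDerivWithinAt_nonneg (convex_Ioi 0)
    (f' := fun τ => 1 / τ ^ 3 * Gibbs.variance x τ⁻¹)
    (fun τ hτ => (hderiv τ hτ).continuousAt.continuousWithinAt) ?_ ?_⟩
  · rw [interior_Ioi]
    exact fun τ hτ => (hderiv τ hτ).hasDerivWithinAt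
  · rw [interior_Ioi]
    exact fun τ (hτ : 0 < τ) => mul_nonneg (by positivity) (Gibbs.variance_nonneg x τ⁻¹)
end

section
/- Let x ∈ ℝ^N be fixed, not all coordinates equal, and for τ > 0 define p_i(τ) = exp(x_i/τ)/Σ_j exp(x_j/τ). Then the entropy H(τ) = -Σ_i p_i log p_i is strictly increasing in τ. -/
/-!
With β = 1/τ and the Gibbs moments Mₖ(β) = ∑ᵢ xᵢᵏ e^{β xᵢ}, the entropy of the softmax
distribution is log M₀ − β M₁/M₀, whose β-derivative is −β (M₀M₂ − M₁²)/M₀². The bracket is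
M₀² times the variance of x under the softmax weights, which is positive because x is not
constant (Lagrange's identity). So the entropy strictly decreases in β > 0, hence strictly
increases in τ = 1/β.
-/

open Real Finset

section Lagrange

variable {ι : Type*} [Fintype ι]

lemma two_mul_sum_mul_sum_sq_mul_sub_sq_sum_mul (w x : ι → ℝ) :
    2 * ((∑ i, w i) * (∑ i, x i ^ 2 * w i) - (∑ i, x i * w i) ^ 2) =
      ∑ i, ∑ j, w i * w j * (x i - x j) ^ 2 := by
  rw [show ∀ a b c : ℝ, 2 * (a * b - c ^ 2) = b * a + a * b - 2 * (c * c) by intros; ring,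
    sum_mul_sum, sum_mul_sum, sum_mul_sum]
  simp only [mul_sum, ← sum_add_distrib, ← sum_sub_distrib]
  refine sum_congr rfl fun i _ => sum_congr rfl fun j _ => ?_
  ring

lemma sq_sum_mul_lt_sum_mul_sum_sq_mul {w x : ι → ℝ} (hw : ∀ i, 0 < w i)
    (hx : ∃ i j, x i ≠ x j) :
    (∑ i, x i * w i) ^ 2 < (∑ i, w i) * ∑ i, x i ^ 2 * w i := by
  obtain ⟨i, j, hij⟩ := hx
  have hterm_nonneg : ∀ k l, 0 ≤ w k * w l * (x k - x l) ^ 2 := fun k l =>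
    mul_nonneg (mul_pos (hw k) (hw l)).le (sq_nonneg _)
  have hterm_pos : 0 < w i * w j * (x i - x j) ^ 2 :=
    mul_pos (mul_pos (hw i) (hw j)) (sq_pos_of_ne_zero (sub_ne_zero.mpr hij))
  have hpos : 0 < ∑ k, ∑ l, w k * w l * (x k - x l) ^ 2 :=
    sum_pos' (fun k _ => sum_nonneg fun l _ => hterm_nonneg k l)
      ⟨i, mem_univ i, sum_pos' (fun l _ => hterm_nonneg i l) ⟨j, mem_univ j, hterm_pos⟩⟩
  linarith [two_mul_sum_mul_sum_sq_mul_sub_sq_sum_mul w x]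

end Lagrange

section Gibbs

variable {ι : Type*} [Fintype ι] (x : ι → ℝ)

noncomputable def gibbsMoment (k : ℕ) (β : ℝ) : ℝ := ∑ i, x i ^ k * exp (x i * β)

noncomputable def gibbsEntropy (β : ℝ) : ℝ :=
  log (gibbsMoment x 0 β) - β * (gibbsMoment x 1 β / gibbsMoment x 0 β)

lemma gibbsMoment_zero (β : ℝ) : gibbsMoment x 0 β = ∑ i, exp (x i * β) := by
  simp [gibbsMoment]

lemma gibbsMoment_one (β : ℝ) : gibbsMoment x 1 β = ∑ i, x i * exp (x i * β) := by
  simp [gibbsMoment]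

lemma gibbsMoment_zero_pos [Nonempty ι] (β : ℝ) : 0 < gibbsMoment x 0 β := by
  rw [gibbsMoment_zero]
  exact sum_pos (fun i _ => exp_pos _) univ_nonempty

lemma hasDerivAt_gibbsMoment (k : ℕ) (β : ℝ) :
    HasDerivAt (gibbsMoment x k) (gibbsMoment x (k + 1) β) β := by
  unfold gibbsMoment
  exact (HasDerivAt.fun_sum fun i _ =>
    (((hasDerivAt_id' β).const_mul (x i)).exp).const_mul (x i ^ k)).congr_deriv
    (sum_congr rfl fun i _ => by ring)

lemma sq_gibbsMoment_one_lt (hx : ∃ i j, x i ≠ x j) (β : ℝ) :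
    gibbsMoment x 1 β ^ 2 < gibbsMoment x 0 β * gibbsMoment x 2 β := by
  rw [gibbsMoment_zero, gibbsMoment_one]
  exact sq_sum_mul_lt_sum_mul_sum_sq_mul (fun i => exp_pos (x i * β)) hx

lemma neg_sum_mul_log_softmax [Nonempty ι] (β : ℝ) :
    -∑ i, exp (x i * β) / gibbsMoment x 0 β * log (exp (x i * β) / gibbsMoment x 0 β) =
      gibbsEntropy x β := by
  have hZ := (gibbsMoment_zero_pos x β).ne'
  have hterm : ∀ i, exp (x i * β) / gibbsMoment x 0 β * log (exp (x i * β) / gibbsMoment x 0 β) =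
      β * (x i * exp (x i * β)) / gibbsMoment x 0 β -
        log (gibbsMoment x 0 β) * (exp (x i * β) / gibbsMoment x 0 β) := fun i => by
    rw [log_div (exp_ne_zero _) hZ, log_exp]
    ring
  simp only [hterm, sum_sub_distrib, ← sum_div, ← mul_sum, ← gibbsMoment_zero, ← gibbsMoment_one,
    div_self hZ, gibbsEntropy]
  ring

lemma hasDerivAt_gibbsEntropy [Nonempty ι] (β : ℝ) :
    HasDerivAt (gibbsEntropy x)
      (-(β * ((gibbsMoment x 0 β * gibbsMoment x 2 β - gibbsMoment x 1 β ^ 2) /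
        gibbsMoment x 0 β ^ 2))) β := by
  have hZ := (gibbsMoment_zero_pos x β).ne'
  have hlog := (hasDerivAt_gibbsMoment x 0 β).log hZ
  have hmean := (hasDerivAt_gibbsMoment x 1 β).div (hasDerivAt_gibbsMoment x 0 β) hZ
  refine (hlog.sub ((hasDerivAt_id' β).mul hmean)).congr_deriv ?_
  simp only [Pi.div_apply]
  field_simp
  ring

lemma gibbsEntropy_strictAntiOn (hx : ∃ i j, x i ≠ x j) :
    StrictAntiOn (gibbsEntropy x) (Set.Ioi 0) := by
  have : Nonempty ι := ⟨hx.choose⟩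
  refine strictAntiOn_of_deriv_neg (convex_Ioi 0)
    (fun β _ => (hasDerivAt_gibbsEntropy x β).continuousAt.continuousWithinAt) fun β hβ => ?_
  rw [interior_Ioi, Set.mem_Ioi] at hβ
  rw [(hasDerivAt_gibbsEntropy x β).deriv, neg_lt_zero]
  have := sub_pos.mpr (sq_gibbsMoment_one_lt x hx β)
  have := gibbsMoment_zero_pos x β
  positivity

end Gibbs

theorem softmax_entropy_strictMono
    (N : ℕ) (x : Fin N → ℝ) (hx : ∃ i j : Fin N, x i ≠ x j)
    (p : ℝ → Fin N → ℝ)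
    (hp : ∀ t i, p t i = Real.exp (x i / t) / ∑ j, Real.exp (x j / t))
    (H : ℝ → ℝ)
    (hH : ∀ t, H t = -∑ i, p t i * Real.log (p t i)) :
    StrictMonoOn H (Set.Ioi (0 : ℝ)) := by
  have : Nonempty (Fin N) := ⟨hx.choose⟩
  have hH_eq : H = gibbsEntropy x ∘ fun t => t⁻¹ := by
    ext t
    rw [hH, Function.comp_apply, ← neg_sum_mul_log_softmax, gibbsMoment_zero]
    simp only [hp, div_eq_mul_inv]
  rw [hH_eq]
  exact (gibbsEntropy_strictAntiOn x hx).comp strictAntiOn_inv_pos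
    fun t (ht : 0 < t) => inv_pos.mpr ht
end

section
/- Let x ∈ ℝ^N be fixed and for τ > 0 let p(τ) be the softmax of x/τ. Define the variance V(τ) = (1/N) Σ_i (p_i - 1/N)². Then dV/dτ = -(2/(N τ²)) Σ_i p_i² (x_i - μ), where μ = Σ_i p_i x_i; consequently V is monotonically nonincreasing in τ. -/
/-!
Writing `μ` for the `p`-weighted mean of `x`, each coordinate of the softmax satisfies
`dpᵢ/dτ = -pᵢ (xᵢ - μ) / τ²`. In `dV/dτ = (2/N) Σ (pᵢ - 1/N) dpᵢ/dτ` the `1/N` part then drops out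
because `Σ pᵢ (xᵢ - μ) = 0`. The same identity gives monotonicity: since `pᵢ = f (xᵢ)` for an
increasing `f`, `Σ pᵢ² (xᵢ - μ) = Σ pᵢ (f xᵢ - f μ) (xᵢ - μ)`, and every term is nonnegative.
-/

open Finset Real

theorem sum_mul_mul_sub_nonneg_of_monotone {ι : Type*} (s : Finset ι) {w x : ι → ℝ} {f : ℝ → ℝ}
    (hf : Monotone f) (hw : ∀ i ∈ s, 0 ≤ w i) {μ : ℝ} (hμ : ∑ i ∈ s, w i * (x i - μ) = 0) :
    0 ≤ ∑ i ∈ s, w i * f (x i) * (x i - μ) := by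
  have hterm (i : ι) : 0 ≤ (f (x i) - f μ) * (x i - μ) := by
    rcases le_total (x i) μ with h | h
    · exact mul_nonneg_of_nonpos_of_nonpos (sub_nonpos.2 (hf h)) (sub_nonpos.2 h)
    · exact mul_nonneg (sub_nonneg.2 (hf h)) (sub_nonneg.2 h)
  calc 0 ≤ ∑ i ∈ s, w i * ((f (x i) - f μ) * (x i - μ)) :=
        sum_nonneg fun i hi => mul_nonneg (hw i hi) (hterm i)
    _ = ∑ i ∈ s, w i * f (x i) * (x i - μ) - f μ * ∑ i ∈ s, w i * (x i - μ) := by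
        rw [mul_sum, ← sum_sub_distrib]
        exact sum_congr rfl fun i _ => by ring
    _ = ∑ i ∈ s, w i * f (x i) * (x i - μ) := by rw [hμ, mul_zero, sub_zero]

theorem hasDerivAt_exp_div (a : ℝ) {τ : ℝ} (hτ : τ ≠ 0) :
    HasDerivAt (fun t => exp (a / t)) (-(exp (a / τ) * a) / τ ^ 2) τ := by
  convert ((hasDerivAt_inv hτ).const_mul a).exp using 1
  · simp only [div_eq_mul_inv]
  · field_simp

theorem hasDerivAt_sum_exp_div {ι : Type*} [Fintype ι] (x : ι → ℝ) {τ : ℝ} (hτ : τ ≠ 0) :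
    HasDerivAt (fun t => ∑ j, exp (x j / t)) (-(∑ j, exp (x j / τ) * x j) / τ ^ 2) τ := by
  simpa only [neg_div, sum_neg_distrib, ← sum_div] using
    HasDerivAt.fun_sum fun j _ => hasDerivAt_exp_div (x j) hτ

noncomputable def softmax {ι : Type*} [Fintype ι] (x : ι → ℝ) (t : ℝ) (i : ι) : ℝ :=
  exp (x i / t) / ∑ j, exp (x j / t)

noncomputable def softmaxVariance {ι : Type*} [Fintype ι] (x : ι → ℝ) (t : ℝ) : ℝ :=
  (1 / (Fintype.card ι : ℝ)) * ∑ i, (softmax x t i - 1 / (Fintype.card ι : ℝ)) ^ 2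

namespace softmax

variable {ι : Type*} [Fintype ι] (x : ι → ℝ)

theorem nonneg (t : ℝ) (i : ι) : 0 ≤ softmax x t i := by
  unfold softmax; positivity

theorem sum_mul_eq (t : ℝ) :
    ∑ j, softmax x t j * x j = (∑ j, exp (x j / t) * x j) / ∑ j, exp (x j / t) := by
  simp only [softmax, div_mul_eq_mul_div, ← sum_div]

theorem sum_mul_sub_mean (t : ℝ) :
    ∑ i, softmax x t i * (x i - ∑ j, softmax x t j * x j) = 0 := by
  rcases isEmpty_or_nonempty ι with _ | _
  · simp
  have hZ : ∑ j, exp (x j / t) ≠ 0 := (sum_pos (fun j _ => exp_pos _) univ_nonempty).ne'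
  have hsum : ∑ i, softmax x t i = 1 := by simp only [softmax, ← sum_div, div_self hZ]
  simp only [mul_sub, sum_sub_distrib, ← sum_mul, hsum, one_mul, sub_self]

theorem sum_sq_mul_sub_mean_nonneg {t : ℝ} (ht : 0 ≤ t) :
    0 ≤ ∑ i, softmax x t i ^ 2 * (x i - ∑ j, softmax x t j * x j) := by
  have hmono : Monotone fun y => exp (y / t) / ∑ j, exp (x j / t) :=
    fun a b hab => by dsimp only; gcongr
  simp only [sq]
  exact sum_mul_mul_sub_nonneg_of_monotone univ hmono (fun i _ => nonneg x t i)
    (sum_mul_sub_mean x t)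

theorem hasDerivAt {τ : ℝ} (hτ : τ ≠ 0) (i : ι) :
    HasDerivAt (fun t => softmax x t i)
      (-(softmax x τ i * (x i - ∑ j, softmax x τ j * x j)) / τ ^ 2) τ := by
  have hZ : ∑ j, exp (x j / τ) ≠ 0 := (sum_pos (fun j _ => exp_pos _) ⟨i, mem_univ i⟩).ne'
  refine ((hasDerivAt_exp_div (x i) hτ).div (hasDerivAt_sum_exp_div x hτ) hZ).congr_deriv ?_
  rw [sum_mul_eq, softmax]
  field_simp
  ring

end softmax

theorem hasDerivAt_softmaxVariance {ι : Type*} [Fintype ι] (x : ι → ℝ) {τ : ℝ} (hτ : τ ≠ 0) :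
    HasDerivAt (softmaxVariance x)
      (-(2 / ((Fintype.card ι : ℝ) * τ ^ 2)) *
        ∑ i, softmax x τ i ^ 2 * (x i - ∑ j, softmax x τ j * x j)) τ := by
  set c := 1 / (Fintype.card ι : ℝ) with hc
  set μ := ∑ j, softmax x τ j * x j
  have hterm (i : ι) := ((softmax.hasDerivAt x hτ i).sub_const c).fun_pow 2
  refine ((HasDerivAt.fun_sum fun i _ => hterm i).const_mul c).congr_deriv ?_
  have hsplit : ∑ i, (2 : ℕ) * (softmax x τ i - c) ^ (2 - 1) *
        (-(softmax x τ i * (x i - μ)) / τ ^ 2)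
      = -(2 / τ ^ 2) * ∑ i, softmax x τ i ^ 2 * (x i - μ)
        + 2 * c / τ ^ 2 * ∑ i, softmax x τ i * (x i - μ) := by
    rw [mul_sum, mul_sum, ← sum_add_distrib]
    exact sum_congr rfl fun i _ => by push_cast; ring
  rw [hsplit, softmax.sum_mul_sub_mean, hc]
  ring

theorem antitoneOn_softmaxVariance {ι : Type*} [Fintype ι] (x : ι → ℝ) :
    AntitoneOn (softmaxVariance x) (Set.Ioi 0) := by
  have hderiv (τ : ℝ) (hτ : τ ∈ Set.Ioi 0) := hasDerivAt_softmaxVariance x (ne_of_gt hτ)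
  refine antitoneOn_of_deriv_nonpos (convex_Ioi 0)
    (fun τ hτ => (hderiv τ hτ).continuousAt.continuousWithinAt) ?_ ?_ <;> rw [interior_Ioi]
  · exact fun τ hτ => (hderiv τ hτ).differentiableAt.differentiableWithinAt
  · intro τ hτ
    rw [(hderiv τ hτ).deriv]
    exact mul_nonpos_of_nonpos_of_nonneg (neg_nonpos.2 (by positivity))
      (softmax.sum_sq_mul_sub_mean_nonneg x (le_of_lt hτ))

theorem softmax_probability_variance_deriv_and_antitone
    (N : ℕ) (x : Fin N → ℝ)
    (p : ℝ → Fin N → ℝ)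
    (hp : ∀ t i, p t i = Real.exp (x i / t) / ∑ j, Real.exp (x j / t))
    (V : ℝ → ℝ)
    (hV : ∀ t, V t = (1 / (N : ℝ)) * ∑ i, (p t i - 1 / (N : ℝ)) ^ 2) :
    (∀ τ : ℝ, 0 < τ →
      HasDerivAt V
        (-(2 / ((N : ℝ) * τ ^ 2)) *
          ∑ i, (p τ i) ^ 2 * (x i - ∑ j, p τ j * x j)) τ) ∧
    AntitoneOn V (Set.Ioi (0 : ℝ)) := by
  obtain rfl : p = softmax x := funext fun t => funext (hp t)
  obtain rfl : V = softmaxVariance x :=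
    funext fun t => by rw [hV, softmaxVariance, Fintype.card_fin]
  refine ⟨fun τ hτ => ?_, antitoneOn_softmaxVariance x⟩
  simpa only [Fintype.card_fin] using hasDerivAt_softmaxVariance x hτ.ne'
end

section
/- Let δ ∈ ℝ^N and τ > 0 satisfy Σ_i exp(δ_i/τ) δ_i = 0. Then Σ_i exp(2δ_i/τ) δ_i ≥ 0. -/
theorem softmax_exp2_deviation_nonneg
    (N : ℕ) (δ : Fin N → ℝ) (τ : ℝ) (hτ : 0 < τ)
    (h : ∑ i, Real.exp (δ i / τ) * δ i = 0) :
    0 ≤ ∑ i, Real.exp (2 * δ i / τ) * δ i := by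
  rw [← h]
  apply Finset.sum_le_sum
  intro i _
  have h2 : (2 : ℝ) * δ i / τ = δ i / τ + δ i / τ := by ring
  rw [h2, Real.exp_add]
  rcases le_or_gt 0 (δ i) with hd | hd
  · have h1 : (1 : ℝ) ≤ Real.exp (δ i / τ) :=
      Real.one_le_exp (div_nonneg hd hτ.le)
    nlinarith [mul_nonneg (mul_nonneg (Real.exp_pos (δ i / τ)).le hd) (sub_nonneg.mpr h1)]
  · have h1 : Real.exp (δ i / τ) ≤ 1 :=
      Real.exp_le_one_iff.mpr (div_nonpos_of_nonpos_of_nonneg hd.le hτ.le)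
    nlinarith [mul_nonneg (mul_nonneg (Real.exp_pos (δ i / τ)).le (neg_nonneg.mpr hd.le)) (sub_nonneg.mpr h1), Real.exp_pos (δ i / τ)]
end
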